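/- arXiv:2506.21948 — 2 statements merged into one kernel-verified Lean document; each statement's English description precedes it below -/
import Mathlib

section
/- (Case 1 of the correctness of SHRINK.) Suppose s ∉ 𝒮(Δ), the shrinking set 𝒢 is nonempty and proper, v_i(s) = u for all i ∈ 𝒢, and v_i(s) > v_j(s) for all i ∈ 𝒢 and j ∉ 𝒢. Let p̂ ∉ 𝒢 attain the maximum of t_j over j ∉ 𝒢, and assume u²Δ_{p̂}² > u²·‖s^{𝓘_{p̂}∖𝓘_𝒢}‖₂² + ‖s^{𝓘_{p̂}∩𝓘_𝒢}‖₂². Then t_* = 1/u, and the output s_* satisfies v_i(s_*) = 1 for every i ∈ 𝒢 and v_i(s_*) ≤ 1 for every i ∉ 𝒢; in particular s_* ∈ 𝒮(Δ). -/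
/-! Since every element of `𝒢` strictly dominates the others, `u > 0`, and the case hypothesis
`u²Δ_p̂² > u²‖s^{𝓘_p̂∖𝓘_𝒢}‖² + ‖s^{𝓘_p̂∩𝓘_𝒢}‖²` says exactly that `t_p̂ ≤ 1/u`; as `p̂` maximizes
`t_j` off `𝒢`, every `t_i` is at most `1/u`, so `t_* = 1/u`. Scaling `s` by `1/u` on `𝓘_𝒢`
divides `‖s^{𝓘_i}‖` by `u` for `i ∈ 𝒢`, and for `i ∉ 𝒢` the Pythagorean split
`‖s_*^{𝓘_i}‖² = ‖s^{𝓘_i∩𝓘_𝒢}‖²/u² + ‖s^{𝓘_i∖𝓘_𝒢}‖²` turns `t_i ≤ 1/u` into `‖s_*^{𝓘_i}‖ ≤ Δ_i`. -/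

/-- Coordinate projection: `(proj I x) j = x j` if `j ∈ I`, else `0`. -/
noncomputable def proj {n : ℕ} (I : Finset (Fin n)) (x : EuclideanSpace ℝ (Fin n)) :
    EuclideanSpace ℝ (Fin n) :=
  WithLp.toLp 2 (fun j => if j ∈ I then x j else 0)

section Projection

variable {n : ℕ} (I J : Finset (Fin n)) (x : EuclideanSpace ℝ (Fin n))

@[simp]
lemma proj_apply (j : Fin n) : proj I x j = if j ∈ I then x j else 0 := rfl

lemma norm_proj_sq : ‖proj I x‖ ^ 2 = ∑ j ∈ I, x j ^ 2 := by
  simp [EuclideanSpace.norm_sq_eq, apply_ite, Finset.sum_ite_mem]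

lemma norm_proj_sq_eq_inter_add_sdiff :
    ‖proj I x‖ ^ 2 = ‖proj (I ∩ J) x‖ ^ 2 + ‖proj (I \ J) x‖ ^ 2 := by
  simp only [norm_proj_sq, Finset.sum_inter_add_sum_sdiff]

lemma proj_inter_add_smul_proj (t : ℝ) :
    proj (I ∩ J) (x + (t - 1) • proj J x) = t • proj (I ∩ J) x := by
  ext j
  by_cases hj : j ∈ I ∩ J
  · simp only [proj_apply, hj, (Finset.mem_inter.1 hj).2, if_true, PiLp.add_apply,
      PiLp.smul_apply, smul_eq_mul]
    ring
  · simp [hj]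

lemma proj_sdiff_add_smul_proj (t : ℝ) :
    proj (I \ J) (x + (t - 1) • proj J x) = proj (I \ J) x := by
  ext j
  by_cases hj : j ∈ I \ J
  · simp [hj, (Finset.mem_sdiff.1 hj).2]
  · simp [hj]

lemma norm_proj_add_smul_proj_sq (t : ℝ) :
    ‖proj I (x + (t - 1) • proj J x)‖ ^ 2
      = t ^ 2 * ‖proj (I ∩ J) x‖ ^ 2 + ‖proj (I \ J) x‖ ^ 2 := by
  rw [norm_proj_sq_eq_inter_add_sdiff I J, proj_inter_add_smul_proj, proj_sdiff_add_smul_proj,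
    norm_smul, mul_pow, Real.norm_eq_abs, sq_abs]

lemma norm_proj_add_smul_proj_of_subset {I J} (hIJ : I ⊆ J) {t : ℝ} (ht : 0 ≤ t) :
    ‖proj I (x + (t - 1) • proj J x)‖ = t * ‖proj I x‖ := by
  have h := proj_inter_add_smul_proj I J x t
  rw [Finset.inter_eq_left.2 hIJ] at h
  rw [h, norm_smul, Real.norm_of_nonneg ht]

end Projection

lemma div_sqrt_le_one_div_iff {a u D : ℝ} (ha : 0 ≤ a) (hu : 0 < u) (hD : 0 < D) :
    a / √D ≤ 1 / u ↔ u ^ 2 * a ^ 2 ≤ D := by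
  rw [div_le_div_iff₀ (Real.sqrt_pos.2 hD) hu, one_mul,
    Real.le_sqrt (mul_nonneg ha hu.le) hD.le, mul_pow, mul_comm]

lemma norm_proj_shrink_le {n : ℕ} {I J : Finset (Fin n)} {x : EuclideanSpace ℝ (Fin n)}
    {u Δ : ℝ} (hu : 0 < u) (hlt : ‖proj I x‖ < u * Δ)
    (ht : ‖proj (I \ J) x‖ / √(u ^ 2 * Δ ^ 2 - ‖proj (I ∩ J) x‖ ^ 2) ≤ 1 / u) :
    ‖proj I (x + (1 / u - 1) • proj J x)‖ ≤ Δ := by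
  have hΔ : 0 ≤ Δ := (pos_of_mul_pos_right ((norm_nonneg _).trans_lt hlt) hu.le).le
  have hsplit := norm_proj_sq_eq_inter_add_sdiff I J x
  have hD : 0 < u ^ 2 * Δ ^ 2 - ‖proj (I ∩ J) x‖ ^ 2 := by
    nlinarith [norm_nonneg (proj I x), norm_nonneg (proj (I \ J) x)]
  rw [div_sqrt_le_one_div_iff (norm_nonneg _) hu hD] at ht
  rw [← pow_le_pow_iff_left₀ (norm_nonneg _) hΔ two_ne_zero, norm_proj_add_smul_proj_sq]
  have hscaled : u ^ 2 * ((1 / u) ^ 2 * ‖proj (I ∩ J) x‖ ^ 2 + ‖proj (I \ J) x‖ ^ 2)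
      = u ^ 2 * ‖proj (I \ J) x‖ ^ 2 + ‖proj (I ∩ J) x‖ ^ 2 := by
    field_simp
    ring
  exact le_of_mul_le_mul_left (by linarith) (pow_pos hu 2)

theorem shrink_case_one_general {n q : ℕ} (I : Fin q → Finset (Fin n)) (Δ : Fin q → ℝ)
    (hΔ : ∀ i, 0 < Δ i) (s : EuclideanSpace ℝ (Fin n)) (u : ℝ)
    (𝒢 : Finset (Fin q)) (h𝒢ne : 𝒢.Nonempty)
    (hvG : ∀ i ∈ 𝒢, ‖proj (I i) s‖ / Δ i = u)
    (hvlt : ∀ i ∈ 𝒢, ∀ j ∉ 𝒢, ‖proj (I j) s‖ / Δ j < ‖proj (I i) s‖ / Δ i)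
    (IG : Finset (Fin n)) (hIG : IG = 𝒢.biUnion I)
    (tf : Fin q → ℝ)
    (htf : ∀ i, tf i = if i ∈ 𝒢 then 1 / u
      else max (1 / u)
        (‖proj (I i \ IG) s‖ / Real.sqrt (u ^ 2 * Δ i ^ 2 - ‖proj (I i ∩ IG) s‖ ^ 2)))
    (phat : Fin q) (hphat : phat ∉ 𝒢)
    (hphatmax : ∀ j ∉ 𝒢, tf j ≤ tf phat)
    (hcase : u ^ 2 * ‖proj (I phat \ IG) s‖ ^ 2 + ‖proj (I phat ∩ IG) s‖ ^ 2
      < u ^ 2 * Δ phat ^ 2)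
    (tstar : ℝ)
    (htstar : tstar = Finset.univ.sup' (Finset.univ_nonempty_iff.mpr ⟨phat⟩) tf)
    (sstar : EuclideanSpace ℝ (Fin n))
    (hsstar : sstar = s + (tstar - 1) • proj IG s) :
    tstar = 1 / u ∧
    (∀ i ∈ 𝒢, ‖proj (I i) sstar‖ / Δ i = 1) ∧
    (∀ i ∉ 𝒢, ‖proj (I i) sstar‖ / Δ i ≤ 1) ∧
    (∀ i, ‖proj (I i) sstar‖ ≤ Δ i) := by
  obtain ⟨g, hg⟩ := h𝒢ne
  have hu : 0 < u := by
    simpa [hvG g hg] using (div_nonneg (norm_nonneg _) (hΔ phat).le).trans_lt (hvlt g hg phat hphat)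
  have htf_le : ∀ i, tf i ≤ 1 / u := by
    intro i
    by_cases hi : i ∈ 𝒢
    · rw [htf i, if_pos hi]
    · refine (hphatmax i hi).trans ?_
      have hD : 0 < u ^ 2 * Δ phat ^ 2 - ‖proj (I phat ∩ IG) s‖ ^ 2 := by
        nlinarith [norm_nonneg (proj (I phat \ IG) s)]
      rw [htf phat, if_neg hphat, max_le_iff, div_sqrt_le_one_div_iff (norm_nonneg _) hu hD]
      exact ⟨le_rfl, by linarith⟩
  have hts : tstar = 1 / u := htstar ▸ le_antisymm (Finset.sup'_le _ _ fun i _ => htf_le i)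
    ((htf g).trans (if_pos hg) ▸ Finset.le_sup' tf (Finset.mem_univ g))
  have hG : ∀ i ∈ 𝒢, ‖proj (I i) sstar‖ / Δ i = 1 := by
    intro i hi
    rw [hsstar, hts, norm_proj_add_smul_proj_of_subset s (hIG ▸ Finset.subset_biUnion_of_mem I hi)
      (by positivity), mul_div_assoc, hvG i hi, one_div_mul_cancel hu.ne']
  have hN : ∀ i ∉ 𝒢, ‖proj (I i) sstar‖ ≤ Δ i := by
    intro i hi
    have hti := htf_le i
    rw [htf i, if_neg hi, max_le_iff] at hti
    rw [hsstar, hts]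
    exact norm_proj_shrink_le hu ((div_lt_iff₀ (hΔ i)).1 (hvG g hg ▸ hvlt g hg i hi)) hti.2
  refine ⟨hts, hG, fun i hi => (div_le_one (hΔ i)).2 (hN i hi), fun i => ?_⟩
  by_cases hi : i ∈ 𝒢
  · exact ((div_eq_one_iff_eq (hΔ i).ne').1 (hG i hi)).le
  · exact hN i hi

/-- Case 1 of the correctness of the SHRINK subroutine: if
`u²Δ_p̂² > u²‖s^{I_p̂∖I_G}‖² + ‖s^{I_p̂∩I_G}‖²` for a maximizer `p̂ ∉ 𝒢` of the
elemental ratios, then `t_* = 1/u` and the output `s_*` satisfies `v_i(s_*) = 1`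
on `𝒢`, `v_i(s_*) ≤ 1` off `𝒢`; in particular `s_* ∈ 𝒮(Δ)`. -/
theorem shrink_case_one {n q : ℕ} (I : Fin q → Finset (Fin n)) (Δ : Fin q → ℝ)
    (hΔ : ∀ i, 0 < Δ i) (s : EuclideanSpace ℝ (Fin n)) (u : ℝ)
    (𝒢 : Finset (Fin q)) (h𝒢ne : 𝒢.Nonempty) (h𝒢pr : 𝒢 ≠ Finset.univ)
    (hsout : ¬ (∀ i, ‖proj (I i) s‖ ≤ Δ i))
    (hvG : ∀ i ∈ 𝒢, ‖proj (I i) s‖ / Δ i = u)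
    (hvlt : ∀ i ∈ 𝒢, ∀ j ∉ 𝒢, ‖proj (I j) s‖ / Δ j < ‖proj (I i) s‖ / Δ i)
    (IG : Finset (Fin n)) (hIG : IG = 𝒢.biUnion I)
    (tf : Fin q → ℝ)
    (htf : ∀ i, tf i = if i ∈ 𝒢 then 1 / u
      else max (1 / u)
        (‖proj (I i \ IG) s‖ / Real.sqrt (u ^ 2 * Δ i ^ 2 - ‖proj (I i ∩ IG) s‖ ^ 2)))
    (phat : Fin q) (hphat : phat ∉ 𝒢)
    (hphatmax : ∀ j ∉ 𝒢, tf j ≤ tf phat)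
    (hcase : u ^ 2 * ‖proj (I phat \ IG) s‖ ^ 2 + ‖proj (I phat ∩ IG) s‖ ^ 2
      < u ^ 2 * Δ phat ^ 2)
    (tstar : ℝ)
    (htstar : tstar = Finset.univ.sup' (Finset.univ_nonempty_iff.mpr ⟨phat⟩) tf)
    (sstar : EuclideanSpace ℝ (Fin n))
    (hsstar : sstar = s + (tstar - 1) • proj IG s) :
    tstar = 1 / u ∧
    (∀ i ∈ 𝒢, ‖proj (I i) sstar‖ / Δ i = 1) ∧
    (∀ i ∉ 𝒢, ‖proj (I i) sstar‖ / Δ i ≤ 1) ∧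
    (∀ i, ‖proj (I i) sstar‖ ≤ Δ i) :=
  shrink_case_one_general I Δ hΔ s u 𝒢 h𝒢ne hvG hvlt IG hIG tf htf phat hphat hphatmax hcase tstar
    htstar sstar hsstar
end

section
/- (Theorem 2.1, correctness of the SHRINK subroutine.) Suppose s ∉ 𝒮(Δ), the shrinking set 𝒢 is nonempty and proper, v_i(s) = u for all i ∈ 𝒢, and v_i(s) > v_j(s) for all i ∈ 𝒢 and j ∉ 𝒢. Then the output s_* satisfies one of the following two alternatives: either (i) v_i(s_*) = 1 for every i ∈ 𝒢 and v_i(s_*) ≤ 1 for every i ∉ 𝒢; or (ii) there exists p̂ ∉ 𝒢 such that v_i(s_*) = v_{p̂}(s_*) for every i ∈ 𝒢 and v_i(s_*) ≤ v_{p̂}(s_*) for every i ∉ 𝒢 with i ≠ p̂. -/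
namespace Shrink

variable {n : ℕ}

theorem norm_proj_sq (I : Finset (Fin n)) (x : EuclideanSpace ℝ (Fin n)) :
    ‖proj I x‖ ^ 2 = ∑ j ∈ I, x j ^ 2 := by
  rw [EuclideanSpace.norm_eq, Real.sq_sqrt (by positivity), ← Finset.sum_ite_mem_eq]
  simp [proj, apply_ite]

theorem norm_proj_mono {J K : Finset (Fin n)} (h : J ⊆ K) (x : EuclideanSpace ℝ (Fin n)) :
    ‖proj J x‖ ≤ ‖proj K x‖ := by
  rw [← pow_le_pow_iff_left₀ (norm_nonneg _) (norm_nonneg _) two_ne_zero, norm_proj_sq,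
    norm_proj_sq]
  exact Finset.sum_le_sum_of_subset_of_nonneg h fun _ _ _ => sq_nonneg _

theorem add_smul_proj_apply (G : Finset (Fin n)) (t : ℝ) (s : EuclideanSpace ℝ (Fin n))
    (j : Fin n) : (s + (t - 1) • proj G s) j = if j ∈ G then t * s j else s j := by
  simp only [PiLp.add_apply, PiLp.smul_apply, proj, smul_eq_mul]
  split <;> ring

theorem norm_proj_add_smul_proj_sq (I G : Finset (Fin n)) (t : ℝ)
    (s : EuclideanSpace ℝ (Fin n)) :
    ‖proj I (s + (t - 1) • proj G s)‖ ^ 2 =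
      t ^ 2 * ‖proj (I ∩ G) s‖ ^ 2 + ‖proj (I \ G) s‖ ^ 2 := by
  rw [norm_proj_sq, norm_proj_sq, norm_proj_sq, Finset.mul_sum,
    ← Finset.sum_inter_add_sum_sdiff I G]
  congr 1 <;> refine Finset.sum_congr rfl fun j hj => ?_
  · rw [add_smul_proj_apply, if_pos (Finset.mem_inter.mp hj).2, mul_pow]
  · rw [add_smul_proj_apply, if_neg (Finset.mem_sdiff.mp hj).2]

theorem norm_proj_add_smul_proj_of_subset {I G : Finset (Fin n)} (h : I ⊆ G) {t : ℝ}
    (ht : 0 ≤ t) (s : EuclideanSpace ℝ (Fin n)) :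
    ‖proj I (s + (t - 1) • proj G s)‖ = t * ‖proj I s‖ := by
  rw [← sq_eq_sq₀ (norm_nonneg _) (by positivity), norm_proj_add_smul_proj_sq,
    Finset.inter_eq_left.2 h, Finset.sdiff_eq_empty_iff_subset.2 h, norm_proj_sq ∅]
  simp [mul_pow]

theorem sub_norm_proj_inter_sq_pos {I G : Finset (Fin n)} {s : EuclideanSpace ℝ (Fin n)}
    {u Δ : ℝ} (hΔ : 0 < Δ) (hv : ‖proj I s‖ / Δ < u) :
    0 < u ^ 2 * Δ ^ 2 - ‖proj (I ∩ G) s‖ ^ 2 := by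
  rw [div_lt_iff₀ hΔ] at hv
  have := (norm_proj_mono (J := I ∩ G) Finset.inter_subset_left s).trans_lt hv
  nlinarith [norm_nonneg (proj (I ∩ G) s)]

theorem norm_proj_add_smul_proj_div_le {I G : Finset (Fin n)} {s : EuclideanSpace ℝ (Fin n)}
    {t u Δ : ℝ} (hΔ : 0 < Δ) (ht : 0 ≤ t) (hv : ‖proj I s‖ / Δ < u)
    (hratio : ‖proj (I \ G) s‖ / √(u ^ 2 * Δ ^ 2 - ‖proj (I ∩ G) s‖ ^ 2) ≤ t) :
    ‖proj I (s + (t - 1) • proj G s)‖ / Δ ≤ t * u := by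
  have hpos := sub_norm_proj_inter_sq_pos (G := G) hΔ hv
  rw [div_le_iff₀ (Real.sqrt_pos.2 hpos)] at hratio
  have hout : ‖proj (I \ G) s‖ ^ 2 ≤ t ^ 2 * (u ^ 2 * Δ ^ 2 - ‖proj (I ∩ G) s‖ ^ 2) := by
    simpa [mul_pow, Real.sq_sqrt hpos.le] using pow_le_pow_left₀ (norm_nonneg _) hratio 2
  have hu : 0 ≤ u := (div_nonneg (norm_nonneg _) hΔ.le).trans hv.le
  rw [div_le_iff₀ hΔ, ← pow_le_pow_iff_left₀ (norm_nonneg _) (by positivity) two_ne_zero,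
    norm_proj_add_smul_proj_sq]
  linarith

theorem norm_proj_add_smul_proj_div_eq {I G : Finset (Fin n)} {s : EuclideanSpace ℝ (Fin n)}
    {t u Δ : ℝ} (hΔ : 0 < Δ) (ht : 0 ≤ t) (hv : ‖proj I s‖ / Δ < u)
    (hratio : ‖proj (I \ G) s‖ / √(u ^ 2 * Δ ^ 2 - ‖proj (I ∩ G) s‖ ^ 2) = t) :
    ‖proj I (s + (t - 1) • proj G s)‖ / Δ = t * u := by
  have hpos := sub_norm_proj_inter_sq_pos (G := G) hΔ hv
  rw [div_eq_iff (Real.sqrt_pos.2 hpos).ne'] at hratio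
  have hout : ‖proj (I \ G) s‖ ^ 2 = t ^ 2 * (u ^ 2 * Δ ^ 2 - ‖proj (I ∩ G) s‖ ^ 2) := by
    rw [hratio, mul_pow, Real.sq_sqrt hpos.le]
  have hu : 0 ≤ u := (div_nonneg (norm_nonneg _) hΔ.le).trans hv.le
  rw [div_eq_iff hΔ.ne', ← sq_eq_sq₀ (norm_nonneg _) (by positivity),
    norm_proj_add_smul_proj_sq]
  linear_combination hout

end Shrink

open Shrink in
theorem shrink_correct_general {n q : ℕ} (I : Fin q → Finset (Fin n)) (Δ : Fin q → ℝ)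
    (hΔ : ∀ i, 0 < Δ i) (s : EuclideanSpace ℝ (Fin n)) (u : ℝ)
    (𝒢 : Finset (Fin q)) (h𝒢ne : 𝒢.Nonempty) (h𝒢pr : 𝒢 ≠ Finset.univ)
    (hvG : ∀ i ∈ 𝒢, ‖proj (I i) s‖ / Δ i = u)
    (hvlt : ∀ i ∈ 𝒢, ∀ j ∉ 𝒢, ‖proj (I j) s‖ / Δ j < ‖proj (I i) s‖ / Δ i)
    (IG : Finset (Fin n)) (hIG : IG = 𝒢.biUnion I)
    (tf : Fin q → ℝ)
    (htf : ∀ i, tf i = if i ∈ 𝒢 then 1 / u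
      else max (1 / u)
        (‖proj (I i \ IG) s‖ / Real.sqrt (u ^ 2 * Δ i ^ 2 - ‖proj (I i ∩ IG) s‖ ^ 2)))
    (tstar : ℝ)
    (htstar : tstar = Finset.univ.sup' (h𝒢ne.mono (Finset.subset_univ 𝒢)) tf)
    (sstar : EuclideanSpace ℝ (Fin n))
    (hsstar : sstar = s + (tstar - 1) • proj IG s) :
    ((∀ i ∈ 𝒢, ‖proj (I i) sstar‖ / Δ i = 1) ∧
      (∀ i ∉ 𝒢, ‖proj (I i) sstar‖ / Δ i ≤ 1)) ∨
    (∃ phat, phat ∉ 𝒢 ∧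
      (∀ i ∈ 𝒢, ‖proj (I i) sstar‖ / Δ i = ‖proj (I phat) sstar‖ / Δ phat) ∧
      (∀ i, i ∉ 𝒢 → i ≠ phat →
        ‖proj (I i) sstar‖ / Δ i ≤ ‖proj (I phat) sstar‖ / Δ phat)) := by
  subst hsstar
  obtain ⟨g, hg⟩ := id h𝒢ne
  obtain ⟨j₀, hj₀⟩ : ∃ j, j ∉ 𝒢 := by simpa [Finset.eq_univ_iff_forall] using h𝒢pr
  have hv : ∀ j ∉ 𝒢, ‖proj (I j) s‖ / Δ j < u := fun j hj => hvG g hg ▸ hvlt g hg j hj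
  have hu : 0 < u := (div_nonneg (norm_nonneg _) (hΔ j₀).le).trans_lt (hv j₀ hj₀)
  have htf_le : ∀ i, tf i ≤ tstar := fun i => htstar ▸ Finset.le_sup' tf (Finset.mem_univ i)
  have hinv : 1 / u ≤ tstar := by simpa [htf, hg] using htf_le g
  have ht : 0 ≤ tstar := (one_div_pos.2 hu).le.trans hinv
  have hmem : ∀ i ∈ 𝒢, ‖proj (I i) (s + (tstar - 1) • proj IG s)‖ / Δ i = tstar * u := by
    intro i hi
    rw [norm_proj_add_smul_proj_of_subset (hIG ▸ Finset.subset_biUnion_of_mem I hi) ht,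
      mul_div_assoc, hvG i hi]
  have hnot : ∀ j ∉ 𝒢, ‖proj (I j) (s + (tstar - 1) • proj IG s)‖ / Δ j ≤ tstar * u :=
    fun j hj => norm_proj_add_smul_proj_div_le (hΔ j) ht (hv j hj)
      ((le_max_right _ _).trans (by simpa [htf, hj] using htf_le j))
  rcases hinv.eq_or_lt with h | h
  · have h1 : tstar * u = 1 := by rw [← h, one_div_mul_cancel hu.ne']
    exact Or.inl ⟨fun i hi => h1 ▸ hmem i hi, fun j hj => h1 ▸ hnot j hj⟩
  · obtain ⟨p, -, hp⟩ := Finset.exists_mem_eq_sup' (h𝒢ne.mono (Finset.subset_univ 𝒢)) tf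
    rw [← htstar, htf] at hp
    have hpG : p ∉ 𝒢 := fun hpG => h.ne' (by rwa [if_pos hpG] at hp)
    rw [if_neg hpG, eq_comm, max_eq_iff] at hp
    have hpeq := norm_proj_add_smul_proj_div_eq (hΔ p) ht (hv p hpG)
      (hp.resolve_left fun h' => h.ne h'.1).1
    exact Or.inr
      ⟨p, hpG, fun i hi => (hmem i hi).trans hpeq.symm, fun j hj _ => hpeq ▸ hnot j hj⟩

/-- Theorem 2.1 (correctness of the SHRINK subroutine): the output `s_*` either has
violation ratio `1` on `𝒢` and `≤ 1` elsewhere, or there is `p̂ ∉ 𝒢` whose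
violation ratio at `s_*` equals that of every element of `𝒢` and dominates all
the other elements. -/
theorem shrink_correct {n q : ℕ} (I : Fin q → Finset (Fin n)) (Δ : Fin q → ℝ)
    (hΔ : ∀ i, 0 < Δ i) (s : EuclideanSpace ℝ (Fin n)) (u : ℝ)
    (𝒢 : Finset (Fin q)) (h𝒢ne : 𝒢.Nonempty) (h𝒢pr : 𝒢 ≠ Finset.univ)
    (hsout : ¬ (∀ i, ‖proj (I i) s‖ ≤ Δ i))
    (hvG : ∀ i ∈ 𝒢, ‖proj (I i) s‖ / Δ i = u)
    (hvlt : ∀ i ∈ 𝒢, ∀ j ∉ 𝒢, ‖proj (I j) s‖ / Δ j < ‖proj (I i) s‖ / Δ i)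
    (IG : Finset (Fin n)) (hIG : IG = 𝒢.biUnion I)
    (tf : Fin q → ℝ)
    (htf : ∀ i, tf i = if i ∈ 𝒢 then 1 / u
      else max (1 / u)
        (‖proj (I i \ IG) s‖ / Real.sqrt (u ^ 2 * Δ i ^ 2 - ‖proj (I i ∩ IG) s‖ ^ 2)))
    (tstar : ℝ)
    (htstar : tstar = Finset.univ.sup' (h𝒢ne.mono (Finset.subset_univ 𝒢)) tf)
    (sstar : EuclideanSpace ℝ (Fin n))
    (hsstar : sstar = s + (tstar - 1) • proj IG s) :
    ((∀ i ∈ 𝒢, ‖proj (I i) sstar‖ / Δ i = 1) ∧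
      (∀ i ∉ 𝒢, ‖proj (I i) sstar‖ / Δ i ≤ 1)) ∨
    (∃ phat, phat ∉ 𝒢 ∧
      (∀ i ∈ 𝒢, ‖proj (I i) sstar‖ / Δ i = ‖proj (I phat) sstar‖ / Δ phat) ∧
      (∀ i, i ∉ 𝒢 → i ≠ phat →
        ‖proj (I i) sstar‖ / Δ i ≤ ‖proj (I phat) sstar‖ / Δ phat)) :=
  shrink_correct_general I Δ hΔ s u 𝒢 h𝒢ne h𝒢pr hvG hvlt IG hIG tf htf tstar htstar sstar hsstar
end
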